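/- arXiv:1007.2843 — 2 statements merged into one kernel-verified Lean document; each statement's English description precedes it below -/
import Mathlib

section
/- Let f : ℝ^d → ℝ be nonnegative measurable with N := sup_v (1+|v|)^q f(v) < ∞ for q > d+2. Define ρ = ∫ f dv and E = ∫ f |v|^2 dv. Then ρ · (E/ρ)^{(q-d)/2} ≤ C_q · N for a constant C_q depending only on q and d; equivalently ρ^{1-(q-d)/2} E^{(q-d)/2} ≤ C_q N. -/
open MeasureTheory Module

noncomputable def tailFn (d : ℕ) (q D : ℝ) : EuclideanSpace ℝ (Fin d) → ℝ :=
  fun v => if D < ‖v‖ then ‖v‖ ^ (2 - q) else 0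

lemma tailFn_nonneg (d : ℕ) (q D : ℝ) (v : EuclideanSpace ℝ (Fin d)) : 0 ≤ tailFn d q D v := by
  unfold tailFn; split_ifs
  · positivity
  · exact le_refl _

lemma tailFn_meas (d : ℕ) (q D : ℝ) : Measurable (tailFn d q D) := by
  unfold tailFn
  apply Measurable.ite (measurableSet_lt measurable_const measurable_norm) _ measurable_const
  measurability

lemma tailFn_integrable (d : ℕ) (q D : ℝ) (hq : (d:ℝ) + 2 < q) (hD : 0 < D) :
    Integrable (tailFn d q D) := by
  have hc : (0:ℝ) < (1 + D) / D := by positivity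
  have hmaj : Integrable (fun v : EuclideanSpace ℝ (Fin d) =>
      ((1 + D) / D) ^ (q - 2) * (1 + ‖v‖) ^ (-(q - 2))) := by
    have hd2 : ((finrank ℝ (EuclideanSpace ℝ (Fin d)) : ℝ)) < q - 2 := by
      rw [finrank_euclideanSpace_fin]; linarith
    exact (integrable_one_add_norm hd2).const_mul _
  refine hmaj.mono' ((tailFn_meas d q D).aestronglyMeasurable) (ae_of_all _ fun v => ?_)
  rw [Real.norm_eq_abs, abs_of_nonneg (tailFn_nonneg d q D v)]
  unfold tailFn
  split_ifs with h
  · set c := (1 + D) / D with hcdef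
    have hv : 0 < ‖v‖ := hD.trans h
    have h1 : 1 + ‖v‖ ≤ c * ‖v‖ := by
      rw [hcdef, div_mul_eq_mul_div, le_div_iff₀ hD]
      nlinarith
    have h2 : (c * ‖v‖) ^ (2 - q) ≤ (1 + ‖v‖) ^ (2 - q) :=
      Real.rpow_le_rpow_of_nonpos (by positivity) h1 (by linarith)
    have h3 : (c * ‖v‖) ^ (2 - q) = c ^ (2 - q) * ‖v‖ ^ (2 - q) :=
      Real.mul_rpow hc.le (norm_nonneg v)
    have h4 : c ^ (q - 2) * c ^ (2 - q) = 1 := by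
      rw [← Real.rpow_add hc]; norm_num
    calc ‖v‖ ^ (2 - q) = c ^ (q - 2) * (c ^ (2 - q) * ‖v‖ ^ (2 - q)) := by
          rw [← mul_assoc, h4, one_mul]
      _ ≤ c ^ (q - 2) * (1 + ‖v‖) ^ (2 - q) := by
          rw [← h3]
          exact mul_le_mul_of_nonneg_left h2 (by positivity)
      _ = c ^ (q - 2) * (1 + ‖v‖) ^ (-(q - 2)) := by ring_nf
  · positivity

lemma tailFn_scale (d : ℕ) (q D : ℝ) (hD : 0 < D) :
    ∫ v, tailFn d q D v = D ^ ((d:ℝ) + 2 - q) * ∫ v, tailFn d q 1 v := by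
  have key := Measure.integral_comp_smul (volume : Measure (EuclideanSpace ℝ (Fin d)))
    (tailFn d q 1) D⁻¹
  have heq : (fun x : EuclideanSpace ℝ (Fin d) => tailFn d q 1 (D⁻¹ • x))
      = fun x => D ^ (q - 2) * tailFn d q D x := by
    funext x
    unfold tailFn
    rw [norm_smul, Real.norm_eq_abs, abs_of_nonneg (inv_nonneg.2 hD.le)]
    have hcond : (1 < D⁻¹ * ‖x‖) ↔ (D < ‖x‖) := by
      rw [lt_inv_mul_iff₀ hD, mul_one]
    by_cases h : D < ‖x‖
    · rw [if_pos (hcond.2 h), if_pos h]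
      rw [Real.mul_rpow (inv_nonneg.2 hD.le) (norm_nonneg x), Real.inv_rpow hD.le,
        ← Real.rpow_neg hD.le, neg_sub]
    · rw [if_neg (fun hh => h (hcond.1 hh)), if_neg h, mul_zero]
  rw [heq, integral_const_mul, finrank_euclideanSpace_fin] at key
  have habs : |((D⁻¹ : ℝ) ^ d)⁻¹| = D ^ (d : ℝ) := by
    rw [← inv_pow, inv_inv, abs_of_nonneg (pow_nonneg hD.le d), Real.rpow_natCast]
  rw [habs, smul_eq_mul] at key
  have hq2 : D ^ (q - 2) ≠ 0 := ne_of_gt (Real.rpow_pos_of_pos hD _)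
  have hxx : D ^ ((d:ℝ) + 2 - q) * D ^ (q - 2) = D ^ (d:ℝ) := by
    rw [← Real.rpow_add hD]; ring_nf
  apply mul_left_cancel₀ hq2
  rw [key, ← mul_assoc, mul_comm (D ^ (q - 2)) (D ^ ((d:ℝ) + 2 - q)), hxx]

theorem stmt3 (d : ℕ) (q : ℝ) (hq : (d : ℝ) + 2 < q) :
    ∃ C > 0, ∀ (f : EuclideanSpace ℝ (Fin d) → ℝ) (N : ℝ),
      (∀ v, 0 ≤ f v) → Measurable f → Integrable f →
      Integrable (fun v => ‖v‖ ^ 2 * f v) →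
      (∀ v, (1 + ‖v‖) ^ q * f v ≤ N) →
      0 < ∫ v, f v →
      (∫ v, f v) ^ (1 - (q - d) / 2) * (∫ v, ‖v‖ ^ 2 * f v) ^ ((q - d) / 2)
        ≤ C * N := by
  have hq2 : ((d:ℝ)) < q - 2 := by linarith
  set K1 := ∫ v : EuclideanSpace ℝ (Fin d), tailFn d q 1 v with hK1
  have hK1nonneg : 0 ≤ K1 := integral_nonneg (tailFn_nonneg d q 1)
  set K : ℝ := K1 + 1 with hKdef
  have hKpos : 0 < K := by linarith
  set α : ℝ := (q - (d:ℝ)) / 2 with hα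
  have hαpos : (0:ℝ) < α := by rw [hα]; linarith
  refine ⟨2 ^ α * K, by positivity, ?_⟩
  intro f N hf0 hfm hfi hfi2 hfN hρ
  set ρ := ∫ v, f v with hρdef
  set Ee := ∫ v : EuclideanSpace ℝ (Fin d), ‖v‖ ^ 2 * f v with hEdef
  have hE0 : 0 ≤ Ee :=
    integral_nonneg fun v => mul_nonneg (by positivity) (hf0 v)
  have hN : 0 < N := by
    by_contra hcon
    push_neg at hcon
    have hzero : ∀ v, f v = 0 := by
      intro v
      have hp : (0:ℝ) < (1 + ‖v‖) ^ q := Real.rpow_pos_of_pos (by positivity) q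
      have := hfN v
      nlinarith [hf0 v]
    rw [hρdef] at hρ
    simp [hzero] at hρ
  set D := (K * N / ρ) ^ (1 / (q - (d:ℝ))) with hDdef
  have hqd : (0:ℝ) < q - (d:ℝ) := by linarith
  have hDpos : 0 < D := Real.rpow_pos_of_pos (by positivity) _
  have hDpow : D ^ (q - (d:ℝ)) = K * N / ρ := by
    rw [hDdef, ← Real.rpow_mul (by positivity), one_div_mul_cancel (ne_of_gt hqd), Real.rpow_one]
  -- pointwise bound
  have hpt : ∀ v : EuclideanSpace ℝ (Fin d),
      ‖v‖ ^ 2 * f v ≤ D ^ 2 * f v + N * tailFn d q D v := by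
    intro v
    by_cases h : D < ‖v‖
    · have hv : 0 < ‖v‖ := hDpos.trans h
      have hp : (0:ℝ) < (1 + ‖v‖) ^ q := Real.rpow_pos_of_pos (by positivity) q
      have h1 : f v ≤ N * (1 + ‖v‖) ^ (-q) := by
        rw [Real.rpow_neg (by positivity), ← div_eq_mul_inv, le_div_iff₀ hp, mul_comm]
        exact hfN v
      have h2 : (1 + ‖v‖) ^ (-q) ≤ ‖v‖ ^ (-q) :=
        Real.rpow_le_rpow_of_nonpos hv (by linarith) (by linarith)
      have h3 : ‖v‖ ^ 2 * f v ≤ N * ‖v‖ ^ (2 - q) := by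
        have hid : ‖v‖ ^ (2:ℕ) * ‖v‖ ^ (-q) = ‖v‖ ^ (2 - q) := by
          rw [← Real.rpow_natCast ‖v‖ 2, ← Real.rpow_add hv]
          congr 1
        calc ‖v‖ ^ 2 * f v ≤ ‖v‖ ^ 2 * (N * ‖v‖ ^ (-q)) := by
              refine mul_le_mul_of_nonneg_left (h1.trans ?_) (by positivity)
              exact mul_le_mul_of_nonneg_left h2 hN.le
          _ = N * (‖v‖ ^ (2:ℕ) * ‖v‖ ^ (-q)) := by ring
          _ = N * ‖v‖ ^ (2 - q) := by rw [hid]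
      have htv : tailFn d q D v = ‖v‖ ^ (2 - q) := by unfold tailFn; rw [if_pos h]
      rw [htv]
      nlinarith [mul_nonneg (sq_nonneg D) (hf0 v)]
    · have htv : tailFn d q D v = 0 := by unfold tailFn; rw [if_neg h]
      rw [htv, mul_zero, add_zero]
      have : ‖v‖ ^ 2 ≤ D ^ 2 := by
        apply pow_le_pow_left₀ (norm_nonneg v) (not_lt.1 h)
      exact mul_le_mul_of_nonneg_right this (hf0 v)
  have htint := tailFn_integrable d q D hq hDpos
  have hEb : Ee ≤ D ^ 2 * ρ + N * (D ^ ((d:ℝ) + 2 - q) * K1) := by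
    calc Ee ≤ ∫ v : EuclideanSpace ℝ (Fin d), (D ^ 2 * f v + N * tailFn d q D v) :=
          integral_mono hfi2 ((hfi.const_mul _).add (htint.const_mul _)) hpt
      _ = D ^ 2 * ρ + N * ∫ v, tailFn d q D v := by
          rw [integral_add (hfi.const_mul _) (htint.const_mul _), integral_const_mul,
            integral_const_mul]
      _ = D ^ 2 * ρ + N * (D ^ ((d:ℝ) + 2 - q) * K1) := by
          rw [tailFn_scale d q D hDpos]
  have hkey : N * (D ^ ((d:ℝ) + 2 - q) * K) = ρ * D ^ (2:ℝ) := by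
    have h1 : D ^ ((d:ℝ) + 2 - q) * D ^ (q - (d:ℝ)) = D ^ (2:ℝ) := by
      rw [← Real.rpow_add hDpos]; ring_nf
    rw [← h1, hDpow]
    field_simp
  have hD2 : (D:ℝ) ^ (2:ℕ) = D ^ (2:ℝ) := by
    rw [← Real.rpow_natCast D 2]; norm_num
  have hEb2 : Ee ≤ 2 * (ρ * D ^ (2:ℝ)) := by
    have hX : (0:ℝ) < D ^ ((d:ℝ) + 2 - q) := Real.rpow_pos_of_pos hDpos _
    have hK1K : K1 ≤ K := by rw [hKdef]; linarith
    have hmono : N * (D ^ ((d:ℝ) + 2 - q) * K1) ≤ N * (D ^ ((d:ℝ) + 2 - q) * K) := by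
      gcongr
    calc Ee ≤ D ^ 2 * ρ + N * (D ^ ((d:ℝ) + 2 - q) * K1) := hEb
      _ ≤ D ^ 2 * ρ + N * (D ^ ((d:ℝ) + 2 - q) * K) := by linarith [hmono]
      _ = D ^ 2 * ρ + ρ * D ^ (2:ℝ) := by rw [hkey]
      _ = 2 * (ρ * D ^ (2:ℝ)) := by rw [hD2]; ring
  have hstep : ρ ^ (1 - α) * Ee ^ α ≤ ρ ^ (1 - α) * (2 * (ρ * D ^ (2:ℝ))) ^ α :=
    mul_le_mul_of_nonneg_left (Real.rpow_le_rpow hE0 hEb2 hαpos.le)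
      (Real.rpow_nonneg hρ.le _)
  have hfinal : ρ ^ (1 - α) * (2 * (ρ * D ^ (2:ℝ))) ^ α = 2 ^ α * K * N := by
    have hsplit : ((2:ℝ) * (ρ * D ^ (2:ℝ))) ^ α = 2 ^ α * (ρ ^ α * (D ^ (2:ℝ)) ^ α) := by
      rw [Real.mul_rpow (by norm_num) (by positivity),
        Real.mul_rpow hρ.le (by positivity)]
    have hD2α : ((D:ℝ) ^ (2:ℝ)) ^ α = K * N / ρ := by
      rw [← Real.rpow_mul hDpos.le, ← hDpow]
      congr 1
      rw [hα]; ring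
    rw [hsplit, hD2α]
    have hρρ : ρ ^ (1 - α) * ρ ^ α = ρ := by
      rw [← Real.rpow_add hρ]; norm_num
    calc ρ ^ (1 - α) * (2 ^ α * (ρ ^ α * (K * N / ρ)))
        = (ρ ^ (1 - α) * ρ ^ α) * (2 ^ α * (K * N / ρ)) := by ring
      _ = ρ * (2 ^ α * (K * N / ρ)) := by rw [hρρ]
      _ = 2 ^ α * K * N := by field_simp
  calc ρ ^ (1 - (q - d) / 2) * Ee ^ ((q - d) / 2) = ρ ^ (1 - α) * Ee ^ α := by rw [hα]
    _ ≤ ρ ^ (1 - α) * (2 * (ρ * D ^ (2:ℝ))) ^ α := hstep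
    _ = 2 ^ α * K * N := hfinal
    _ = 2 ^ α * K * N := rfl
end

section
/- Let f, g : ℝ^d → ℝ be nonnegative integrable with ρ_f = ∫ f ≥ c > 0 and ρ_g > 0, and with finite second moments. Define T_h by dρ_h T_h = ∫ |v - U_h|² h dv. Then |T_f - T_g| ≤ C(c, ‖U_f‖, ‖U_g‖, T_g) ∫ |f - g|(1+|v|²) dv. -/
open MeasureTheory

local notation "⟪" x ", " y "⟫" => @inner ℝ _ _ x y

set_option maxHeartbeats 1000000 in
theorem stmt17 (d : ℕ) (hd : 0 < d) (c B : ℝ) (hc : 0 < c) (hB : 0 < B) :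
    ∃ C > 0, ∀ (f g : EuclideanSpace ℝ (Fin d) → ℝ)
      (Uf Ug : EuclideanSpace ℝ (Fin d)) (Tf Tg : ℝ),
      (∀ v, 0 ≤ f v) → (∀ v, 0 ≤ g v) →
      Integrable f → Integrable g →
      Integrable (fun v => f v • v) → Integrable (fun v => g v • v) →
      Integrable (fun v => ‖v‖ ^ 2 * f v) → Integrable (fun v => ‖v‖ ^ 2 * g v) →
      c ≤ ∫ v, f v → 0 < ∫ v, g v →
      Uf = (∫ v, f v)⁻¹ • ∫ v, f v • v →
      Ug = (∫ v, g v)⁻¹ • ∫ v, g v • v →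
      (d : ℝ) * (∫ v, f v) * Tf = ∫ v, ‖v - Uf‖ ^ 2 * f v →
      (d : ℝ) * (∫ v, g v) * Tg = ∫ v, ‖v - Ug‖ ^ 2 * g v →
      ‖Uf‖ ≤ B → ‖Ug‖ ≤ B → Tg ≤ B →
      |Tf - Tg| ≤ C * ∫ v, |f v - g v| * (1 + ‖v‖ ^ 2) := by
  refine ⟨(1 + B * (2 + B) + d * B) / ((d : ℝ) * c), by positivity, ?_⟩
  intro f g Uf Ug Tf Tg hf0 hg0 hf hg hfv hgv hf2 hg2 hρf hρg hUf hUg hTf hTg hBf hBg hTgB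
  set ρf := ∫ v, f v with hρfdef
  set ρg := ∫ v, g v with hρgdef
  set a := ∫ v, f v • v with hadef
  set b := ∫ v, g v • v with hbdef
  set I := ∫ v, |f v - g v| * (1 + ‖v‖ ^ 2) with hIdef
  have hρfpos : 0 < ρf := lt_of_lt_of_le hc hρf
  -- integrability of the weighted difference
  have hIint : Integrable (fun v => |f v - g v| * (1 + ‖v‖ ^ 2)) := by
    refine ((hf.sub hg).abs.add (hf2.sub hg2).abs).congr (Filter.Eventually.of_forall ?_)
    intro v
    simp only [Pi.add_apply, Pi.abs_apply, Pi.sub_apply]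
    rw [← mul_sub, abs_mul, abs_of_nonneg (by positivity : (0:ℝ) ≤ ‖v‖ ^ 2)]
    ring
  have hInonneg : 0 ≤ I := integral_nonneg fun v => by positivity
  -- |ρf - ρg| ≤ I
  have h1 : |ρf - ρg| ≤ I := by
    rw [hρfdef, hρgdef, ← integral_sub hf hg]
    calc |∫ v, (f v - g v)| ≤ ∫ v, |f v - g v| := by
          simpa [Real.norm_eq_abs] using norm_integral_le_integral_norm (fun v => f v - g v)
      _ ≤ I := by
          refine integral_mono (hf.sub hg).abs hIint fun v => ?_
          have : (0:ℝ) ≤ ‖v‖ ^ 2 := by positivity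
          nlinarith [abs_nonneg (f v - g v)]
  -- ‖a - b‖ ≤ I
  have h2 : ‖a - b‖ ≤ I := by
    rw [hadef, hbdef, ← integral_sub hfv hgv]
    calc ‖∫ v, (f v • v - g v • v)‖ ≤ ∫ v, ‖f v • v - g v • v‖ :=
          norm_integral_le_integral_norm _
      _ ≤ I := by
          refine integral_mono (hfv.sub hgv).norm hIint fun v => ?_
          have h : ‖f v • v - g v • v‖ = |f v - g v| * ‖v‖ := by
            rw [← sub_smul, norm_smul, Real.norm_eq_abs]
          rw [h]
          nlinarith [abs_nonneg (f v - g v), norm_nonneg v, sq_nonneg (‖v‖ - 1)]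
  -- |∫‖v‖²f - ∫‖v‖²g| ≤ I
  have h3 : |(∫ v, ‖v‖ ^ 2 * f v) - ∫ v, ‖v‖ ^ 2 * g v| ≤ I := by
    rw [← integral_sub hf2 hg2]
    calc |∫ v, (‖v‖ ^ 2 * f v - ‖v‖ ^ 2 * g v)| ≤ ∫ v, |‖v‖ ^ 2 * f v - ‖v‖ ^ 2 * g v| := by
          simpa [Real.norm_eq_abs] using
            norm_integral_le_integral_norm (fun v => ‖v‖ ^ 2 * f v - ‖v‖ ^ 2 * g v)
      _ ≤ I := by
          refine integral_mono (hf2.sub hg2).abs hIint fun v => ?_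
          rw [← mul_sub, abs_mul, abs_of_nonneg (by positivity : (0:ℝ) ≤ ‖v‖ ^ 2)]
          nlinarith [abs_nonneg (f v - g v)]
  -- second-moment identity
  have key : ∀ (h : EuclideanSpace ℝ (Fin d) → ℝ) (U : EuclideanSpace ℝ (Fin d)),
      Integrable h → Integrable (fun v => h v • v) → Integrable (fun v => ‖v‖ ^ 2 * h v) →
      ∫ v, ‖v - U‖ ^ 2 * h v
        = (∫ v, ‖v‖ ^ 2 * h v) - 2 * ⟪U, ∫ v, h v • v⟫ + ‖U‖ ^ 2 * ∫ v, h v := by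
    intro h U hh hhv hh2
    have hinner : Integrable (fun v => (⟪U, h v • v⟫ : ℝ)) := hhv.const_inner U
    have step : ∫ v, ‖v - U‖ ^ 2 * h v
        = ∫ v, (‖v‖ ^ 2 * h v - 2 * ⟪U, h v • v⟫ + ‖U‖ ^ 2 * h v) := by
      refine integral_congr_ae (Filter.Eventually.of_forall fun v => ?_)
      dsimp only
      have e1 : ‖v - U‖ ^ 2 = ‖v‖ ^ 2 - 2 * ⟪v, U⟫ + ‖U‖ ^ 2 := norm_sub_sq_real v U
      have e2 : (⟪U, h v • v⟫ : ℝ) = h v * ⟪v, U⟫ := by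
        rw [real_inner_smul_right, real_inner_comm]
      rw [e1, e2]; ring
    have i2 : Integrable (fun v => (2:ℝ) * ⟪U, h v • v⟫) := hinner.const_mul 2
    have i1 : Integrable (fun v => ‖v‖ ^ 2 * h v - 2 * ⟪U, h v • v⟫) := hh2.sub i2
    have i3 : Integrable (fun v => ‖U‖ ^ 2 * h v) := hh.const_mul _
    rw [step, integral_add i1 i3, integral_sub hh2 i2, integral_const_mul,
      integral_const_mul, integral_inner hhv U]
  have hkf := key f Uf hf hfv hf2
  have hkg := key g Ug hg hgv hg2
  -- a = ρf • Uf, b = ρg • Ug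
  have haUf : a = ρf • Uf := by
    rw [hUf, smul_smul, mul_inv_cancel₀ (ne_of_gt hρfpos), one_smul]
  have hbUg : b = ρg • Ug := by
    rw [hUg, smul_smul, mul_inv_cancel₀ (ne_of_gt hρg), one_smul]
  -- velocity stability: ρf • (Uf - Ug) = (a - b) + (ρg - ρf) • Ug
  have hvel : ρf • (Uf - Ug) = (a - b) + (ρg - ρf) • Ug := by
    rw [smul_sub, ← haUf, hbUg, sub_smul]
    abel
  have hvelnorm : ρf * ‖Uf - Ug‖ ≤ I + I * B := by
    have : ‖ρf • (Uf - Ug)‖ ≤ ‖a - b‖ + ‖(ρg - ρf) • Ug‖ := by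
      rw [hvel]; exact norm_add_le _ _
    rw [norm_smul, Real.norm_eq_abs, abs_of_pos hρfpos, norm_smul, Real.norm_eq_abs,
      abs_sub_comm] at this
    have hp : |ρf - ρg| * ‖Ug‖ ≤ I * B := mul_le_mul h1 hBg (norm_nonneg _) hInonneg
    linarith
  -- kinetic energy of mean part stability
  have hmean : |⟪Uf, a⟫ - ⟪Ug, b⟫| ≤ (I + I * B) * B + B * I := by
    have e : ⟪Uf, a⟫ - ⟪Ug, b⟫ = ⟪Uf - Ug, a⟫ + ⟪Ug, a - b⟫ := by
      rw [inner_sub_left, inner_sub_right]; ring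
    have e2 : (⟪Uf - Ug, a⟫ : ℝ) = ρf * ⟪Uf - Ug, Uf⟫ := by
      rw [haUf, real_inner_smul_right]
    have b1 : |(⟪Uf - Ug, Uf⟫ : ℝ)| ≤ ‖Uf - Ug‖ * ‖Uf‖ := abs_real_inner_le_norm _ _
    have b2 : |(⟪Ug, a - b⟫ : ℝ)| ≤ ‖Ug‖ * ‖a - b‖ := abs_real_inner_le_norm _ _
    have hnUfUg : 0 ≤ ‖Uf - Ug‖ := norm_nonneg _
    calc |⟪Uf, a⟫ - ⟪Ug, b⟫| ≤ |(⟪Uf - Ug, a⟫ : ℝ)| + |(⟪Ug, a - b⟫ : ℝ)| := by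
          rw [e]; exact abs_add_le _ _
      _ ≤ (I + I * B) * B + B * I := by
          rw [e2, abs_mul, abs_of_pos hρfpos]
          have c1 : ρf * ‖Uf - Ug‖ * ‖Uf‖ ≤ (I + I * B) * B :=
            mul_le_mul hvelnorm hBf (norm_nonneg _) (by nlinarith)
          have c2 : ‖Ug‖ * ‖a - b‖ ≤ B * I := mul_le_mul hBg h2 (norm_nonneg _) hB.le
          have c3 : ρf * |(⟪Uf - Ug, Uf⟫ : ℝ)| ≤ ρf * (‖Uf - Ug‖ * ‖Uf‖) :=
            mul_le_mul_of_nonneg_left b1 hρfpos.le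
          nlinarith
  -- Tg nonneg
  have hMg : 0 ≤ ∫ v, ‖v - Ug‖ ^ 2 * g v := integral_nonneg fun v => mul_nonneg (by positivity) (hg0 v)
  have hdpos : (0:ℝ) < d := by exact_mod_cast hd
  have hTgpos : 0 ≤ Tg := by
    nlinarith [mul_pos hdpos hρg]
  -- inner self
  have hselff : (⟪Uf, a⟫ : ℝ) = ρf * ‖Uf‖ ^ 2 := by
    rw [haUf, real_inner_smul_right, real_inner_self_eq_norm_sq]
  have hselfg : (⟪Ug, b⟫ : ℝ) = ρg * ‖Ug‖ ^ 2 := by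
    rw [hbUg, real_inner_smul_right, real_inner_self_eq_norm_sq]
  -- main estimate
  have main : (d : ℝ) * ρf * (Tf - Tg)
      = ((∫ v, ‖v‖ ^ 2 * f v) - ∫ v, ‖v‖ ^ 2 * g v) - (⟪Uf, a⟫ - ⟪Ug, b⟫)
        + (d : ℝ) * (ρg - ρf) * Tg := by
    have hkf' : (d : ℝ) * ρf * Tf = (∫ v, ‖v‖ ^ 2 * f v) - ⟪Uf, a⟫ := by
      rw [hTf, hkf]; linarith [hselff]
    have hkg' : (d : ℝ) * ρg * Tg = (∫ v, ‖v‖ ^ 2 * g v) - ⟪Ug, b⟫ := by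
      rw [hTg, hkg]; linarith [hselfg]
    linear_combination hkf' - hkg'
  have habs : |(d : ℝ) * ρf * (Tf - Tg)| ≤ I + ((I + I * B) * B + B * I) + (d : ℝ) * I * B := by
    rw [main]
    have t1 := abs_add_le (((∫ v, ‖v‖ ^ 2 * f v) - ∫ v, ‖v‖ ^ 2 * g v) - (⟪Uf, a⟫ - ⟪Ug, b⟫))
      ((d : ℝ) * (ρg - ρf) * Tg)
    have t2 := abs_sub (((∫ v, ‖v‖ ^ 2 * f v) - ∫ v, ‖v‖ ^ 2 * g v)) ((⟪Uf, a⟫ - ⟪Ug, b⟫))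
    have t3 : |(d : ℝ) * (ρg - ρf) * Tg| ≤ (d : ℝ) * I * B := by
      have e : |(d : ℝ) * (ρg - ρf) * Tg| = (d : ℝ) * (|ρf - ρg| * |Tg|) := by
        rw [abs_mul, abs_mul, abs_of_pos hdpos, abs_sub_comm]; ring
      have h4 : |ρf - ρg| * |Tg| ≤ I * B := by
        rw [abs_of_nonneg hTgpos]; exact mul_le_mul h1 hTgB hTgpos hInonneg
      rw [e]
      nlinarith
    linarith
  -- conclude
  have hfin : (d : ℝ) * c * |Tf - Tg| ≤ (1 + B * (2 + B) + d * B) * I := by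
    have heq : (d : ℝ) * ρf * |Tf - Tg| = |(d : ℝ) * ρf * (Tf - Tg)| := by
      rw [abs_mul, abs_of_pos (mul_pos hdpos hρfpos)]
    have hp : 0 ≤ (d : ℝ) * |Tf - Tg| * (ρf - c) :=
      mul_nonneg (mul_nonneg hdpos.le (abs_nonneg _)) (by linarith)
    nlinarith [habs]
  rw [div_mul_eq_mul_div, le_div_iff₀ (mul_pos hdpos hc)]
  linarith [hfin]
end
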